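/- arXiv:2310.08604 — 3 statements merged into one kernel-verified Lean document; each statement's English description precedes it below -/
import Mathlib

section
/- Let α > 0 and let p, q, u be non-negative continuous functions on [a, b] with q monotonically increasing on [a, b). If u(t) ≤ p(t) + q(t) ∫_a^t (t−s)^{α−1} u(s) ds for all t ∈ [a, b), then u(t) ≤ p(t) + ∫_a^t [ Σ_{n=1}^∞ (q(t) Γ(α))^n / Γ(nα) · (t−s)^{nα−1} p(s) ] ds for all t ∈ [a, b). -/
/-!
Fix `t`. Since `q` is monotone, on `[a, t]` the hypothesis gives `u ≤ p + Q • J^α u` with the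
constant `Q = q(t) Γ(α)`, where `J^β f (t) = Γ(β)⁻¹ ∫_a^t (t - s)^(β-1) f(s) ds` is the
Riemann–Liouville integral. The operators `J^β` are positive and satisfy `J^β J^α = J^(β+α)`
(Dirichlet's formula: Fubini on the triangle `a < r < s < t` and the Beta integral), so iterating
`n` times gives `u ≤ p + ∑_{k<n} Q^(k+1) J^((k+1)α) p + Q^(n+1) J^((n+1)α) u`. Both
`Q^(n+1) J^((n+1)α) p (t)` and the remainder are bounded by a multiple of
`(Q (t-a)^α)^(n+1) / Γ((n+1)α + 1)`, the terms of a convergent Mittag-Leffler series, so the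
series converges and the remainder tends to `0`.
-/

open MeasureTheory Set intervalIntegral Filter Topology Real

variable {a t α β : ℝ} {f : ℝ → ℝ}

theorem intervalIntegrable_rpow_sub_mul (hβ : 0 < β) (hat : a ≤ t)
    (hf : ContinuousOn f (Icc a t)) :
    IntervalIntegrable (fun s => (t - s) ^ (β - 1) * f s) volume a t := by
  have hK : IntervalIntegrable (fun s : ℝ => (t - s) ^ (β - 1)) volume a t := by
    simpa using (intervalIntegrable_rpow' (a := t - a) (b := t - t) (r := β - 1)
      (by linarith)).comp_sub_left t
  exact hK.mul_continuousOn (by rwa [uIcc_of_le hat])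

theorem integral_rpow_sub (hβ : 0 < β) :
    ∫ s in a..t, (t - s) ^ (β - 1) = (t - a) ^ β / β := by
  rw [integral_comp_sub_left (fun x : ℝ => x ^ (β - 1)) t,
    integral_rpow (Or.inl (by linarith)), sub_self,
    zero_rpow (by rw [sub_add_cancel]; exact hβ.ne'),
    sub_add_cancel, sub_zero]

theorem integral_rpow_sub_mul_le (hβ : 0 < β) (hat : a ≤ t) (hf : ContinuousOn f (Icc a t))
    {M : ℝ} (hfM : ∀ s ∈ Icc a t, f s ≤ M) :
    ∫ s in a..t, (t - s) ^ (β - 1) * f s ≤ M * ((t - a) ^ β / β) := by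
  calc ∫ s in a..t, (t - s) ^ (β - 1) * f s ≤ ∫ s in a..t, (t - s) ^ (β - 1) * M :=
        integral_mono_on hat (intervalIntegrable_rpow_sub_mul hβ hat hf)
          (intervalIntegrable_rpow_sub_mul hβ hat continuousOn_const) fun s hs =>
          mul_le_mul_of_nonneg_left (hfM s hs) (rpow_nonneg (by linarith [hs.2]) _)
    _ = M * ((t - a) ^ β / β) := by
        rw [intervalIntegral.integral_mul_const, integral_rpow_sub hβ, mul_comm]

theorem integral_rpow_mul_rpow_sub (hα : 0 < α) (hβ : 0 < β) {c : ℝ} (hc : 0 < c) :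
    ∫ x in (0 : ℝ)..c, x ^ (α - 1) * (c - x) ^ (β - 1)
      = Gamma α * Gamma β / Gamma (α + β) * c ^ (α + β - 1) := by
  have hcomplex := Complex.betaIntegral_scaled α β hc
  rw [Complex.betaIntegral_eq_Gamma_mul_div _ _ (by simpa) (by simpa)] at hcomplex
  apply Complex.ofReal_injective
  have hcast : ∀ x ∈ uIcc 0 c, ((x ^ (α - 1) * (c - x) ^ (β - 1) : ℝ) : ℂ)
      = (x : ℂ) ^ ((α : ℂ) - 1) * ((c : ℂ) - x) ^ ((β : ℂ) - 1) := by
    intro x hx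
    rw [uIcc_of_le hc.le] at hx
    push_cast [Complex.ofReal_cpow hx.1, Complex.ofReal_cpow (sub_nonneg.2 hx.2)]
    rfl
  rw [← integral_ofReal, integral_congr hcast, hcomplex]
  push_cast [Complex.ofReal_cpow hc.le, ← Complex.Gamma_ofReal]
  ring

theorem integral_rpow_sub_mul_rpow_sub {r : ℝ} (hα : 0 < α) (hβ : 0 < β) (hrt : r < t) :
    ∫ s in r..t, (t - s) ^ (β - 1) * (s - r) ^ (α - 1)
      = Gamma β * Gamma α / Gamma (β + α) * (t - r) ^ (β + α - 1) := by
  have h := integral_rpow_mul_rpow_sub hα hβ (sub_pos.2 hrt)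
  calc ∫ s in r..t, (t - s) ^ (β - 1) * (s - r) ^ (α - 1)
      = ∫ s in r..t, (fun x => x ^ (α - 1) * (t - r - x) ^ (β - 1)) (s - r) :=
        integral_congr fun s _ => by simp only [sub_sub_sub_cancel_right]; ring
    _ = Gamma β * Gamma α / Gamma (β + α) * (t - r) ^ (β + α - 1) := by
        rw [integral_comp_sub_right (fun x => x ^ (α - 1) * (t - r - x) ^ (β - 1)), sub_self, h,
          add_comm α, mul_comm (Gamma α)]

noncomputable def triangleIntegrand (a t α β : ℝ) (f : ℝ → ℝ) : ℝ × ℝ → ℝ :=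
  {z : ℝ × ℝ | a < z.2 ∧ z.2 < z.1 ∧ z.1 < t}.indicator
    fun z => (t - z.1) ^ (β - 1) * ((z.1 - z.2) ^ (α - 1) * f z.2)

theorem triangleIntegrand_eq_indicator_left (s r : ℝ) :
    triangleIntegrand a t α β f (s, r) = (Ioo a t).indicator (fun s => (Ioo a s).indicator
      (fun r => (t - s) ^ (β - 1) * ((s - r) ^ (α - 1) * f r)) r) s := by
  simp only [triangleIntegrand, indicator_apply, mem_ofPred_eq, mem_Ioo]
  split_ifs <;> first | rfl | (exfalso; grind)

theorem triangleIntegrand_eq_indicator_right (s r : ℝ) :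
    triangleIntegrand a t α β f (s, r) = (Ioo a t).indicator (fun r => (Ioo r t).indicator
      (fun s => (t - s) ^ (β - 1) * ((s - r) ^ (α - 1) * f r)) s) r := by
  simp only [triangleIntegrand, indicator_apply, mem_ofPred_eq, mem_Ioo]
  split_ifs <;> first | rfl | (exfalso; grind)

theorem triangleIntegrand_nonneg (hfnn : ∀ s ∈ Icc a t, 0 ≤ f s) (z : ℝ × ℝ) :
    0 ≤ triangleIntegrand a t α β f z := by
  refine indicator_nonneg (fun z hz => ?_) z
  obtain ⟨har, hrs, hst⟩ := hz
  exact mul_nonneg (rpow_nonneg (by linarith) _)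
    (mul_nonneg (rpow_nonneg (by linarith) _) (hfnn _ ⟨har.le, by linarith⟩))

theorem aestronglyMeasurable_triangleIntegrand (hf : ContinuousOn f (Icc a t)) :
    AEStronglyMeasurable (triangleIntegrand a t α β f) (volume.prod volume) := by
  have hT : IsOpen {z : ℝ × ℝ | a < z.2 ∧ z.2 < z.1 ∧ z.1 < t} :=
    (isOpen_lt continuous_const continuous_snd).inter
      ((isOpen_lt continuous_snd continuous_fst).inter (isOpen_lt continuous_fst continuous_const))
  refine (aestronglyMeasurable_indicator_iff hT.measurableSet).2
    (ContinuousOn.aestronglyMeasurable ?_ hT.measurableSet)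
  refine ((continuousOn_const.sub continuousOn_fst).rpow_const fun z hz => ?_).mul
    (((continuousOn_fst.sub continuousOn_snd).rpow_const fun z hz => ?_).mul
      (hf.comp continuousOn_snd fun z hz => ⟨hz.1.le, by linarith [hz.2.1, hz.2.2]⟩))
  · exact Or.inl (sub_ne_zero.2 hz.2.2.ne')
  · exact Or.inl (sub_ne_zero.2 hz.2.1.ne')

theorem integral_triangleIntegrand_left (s : ℝ) :
    ∫ r, triangleIntegrand a t α β f (s, r) = (Ioo a t).indicator
      (fun s => (t - s) ^ (β - 1) * ∫ r in a..s, (s - r) ^ (α - 1) * f r) s := by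
  simp_rw [triangleIntegrand_eq_indicator_left]
  by_cases hs : s ∈ Ioo a t
  · simp only [indicator_of_mem hs]
    rw [MeasureTheory.integral_indicator measurableSet_Ioo, MeasureTheory.integral_const_mul,
      integral_of_le hs.1.le, integral_Ioc_eq_integral_Ioo]
  · simp [indicator_of_notMem hs]

theorem integral_triangleIntegrand_right (hα : 0 < α) (hβ : 0 < β) (r : ℝ) :
    ∫ s, triangleIntegrand a t α β f (s, r) = (Ioo a t).indicator
      (fun r => Gamma β * Gamma α / Gamma (β + α) * ((t - r) ^ (β + α - 1) * f r)) r := by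
  simp_rw [triangleIntegrand_eq_indicator_right]
  by_cases hr : r ∈ Ioo a t
  · simp only [indicator_of_mem hr]
    rw [MeasureTheory.integral_indicator measurableSet_Ioo, ← integral_Ioc_eq_integral_Ioo,
      ← integral_of_le hr.2.le]
    simp_rw [← mul_assoc]
    rw [intervalIntegral.integral_mul_const, integral_rpow_sub_mul_rpow_sub hα hβ hr.2, mul_assoc]
  · simp [indicator_of_notMem hr]

theorem integrable_triangleIntegrand (hα : 0 < α) (hβ : 0 < β) (hat : a ≤ t)
    (hf : ContinuousOn f (Icc a t)) (hfnn : ∀ s ∈ Icc a t, 0 ≤ f s) :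
    Integrable (triangleIntegrand a t α β f) (volume.prod volume) := by
  have hmeas := aestronglyMeasurable_triangleIntegrand (α := α) (β := β) hf
  obtain ⟨M, hM⟩ := isCompact_Icc.exists_bound_of_continuousOn hf
  have hM0 : 0 ≤ M := (norm_nonneg _).trans (hM a ⟨le_rfl, hat⟩)
  have hinner : ∀ s ∈ Ioo a t,
      ∫ r in a..s, (s - r) ^ (α - 1) * f r ≤ M * ((t - a) ^ α / α) := fun s hs =>
    (integral_rpow_sub_mul_le hα hs.1.le (hf.mono (Icc_subset_Icc_right hs.2.le))
      fun r hr => (le_abs_self _).trans (hM r ⟨hr.1, hr.2.trans hs.2.le⟩)).trans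
      (by gcongr <;> linarith [hs.1, hs.2])
  refine (integrable_prod_iff hmeas).2 ⟨Eventually.of_forall fun s => ?_, ?_⟩
  · simp_rw [triangleIntegrand_eq_indicator_left]
    by_cases hs : s ∈ Ioo a t
    · simp only [indicator_of_mem hs]
      refine IntegrableOn.integrable_indicator ?_ measurableSet_Ioo
      exact (intervalIntegrable_iff_integrableOn_Ioo_of_le hs.1.le).1
        ((intervalIntegrable_rpow_sub_mul hα hs.1.le
          (hf.mono (Icc_subset_Icc_right hs.2.le))).const_mul _)
    · simp [indicator_of_notMem hs]
  · have hdom : Integrable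
        ((Ioo a t).indicator fun s => (t - s) ^ (β - 1) * (M * ((t - a) ^ α / α))) :=
      ((intervalIntegrable_iff_integrableOn_Ioo_of_le hat).1
        (intervalIntegrable_rpow_sub_mul hβ hat continuousOn_const)).integrable_indicator
        measurableSet_Ioo
    refine hdom.mono' hmeas.norm.integral_prod_right' (Eventually.of_forall fun s => ?_)
    simp_rw [norm_of_nonneg (triangleIntegrand_nonneg hfnn _)]
    rw [norm_of_nonneg (integral_nonneg fun r => triangleIntegrand_nonneg hfnn _),
      integral_triangleIntegrand_left]
    by_cases hs : s ∈ Ioo a t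
    · simp only [indicator_of_mem hs]
      exact mul_le_mul_of_nonneg_left (hinner s hs) (rpow_nonneg (by linarith [hs.2]) _)
    · simp [indicator_of_notMem hs]

theorem intervalIntegrable_rpow_sub_mul_integral (hα : 0 < α) (hβ : 0 < β) (hat : a ≤ t)
    (hf : ContinuousOn f (Icc a t)) (hfnn : ∀ s ∈ Icc a t, 0 ≤ f s) :
    IntervalIntegrable (fun s => (t - s) ^ (β - 1) * ∫ r in a..s, (s - r) ^ (α - 1) * f r)
      volume a t := by
  have h := (integrable_triangleIntegrand hα hβ hat hf hfnn).integral_prod_left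
  simp only [integral_triangleIntegrand_left] at h
  exact (intervalIntegrable_iff_integrableOn_Ioo_of_le hat).2
    ((integrable_indicator_iff measurableSet_Ioo).1 h)

theorem integral_rpow_sub_mul_integral (hα : 0 < α) (hβ : 0 < β) (hat : a ≤ t)
    (hf : ContinuousOn f (Icc a t)) (hfnn : ∀ s ∈ Icc a t, 0 ≤ f s) :
    ∫ s in a..t, (t - s) ^ (β - 1) * ∫ r in a..s, (s - r) ^ (α - 1) * f r
      = Gamma β * Gamma α / Gamma (β + α) * ∫ r in a..t, (t - r) ^ (β + α - 1) * f r := by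
  have h := integral_integral_swap (f := fun s r => triangleIntegrand a t α β f (s, r))
    (integrable_triangleIntegrand hα hβ hat hf hfnn)
  simp only [integral_triangleIntegrand_left, integral_triangleIntegrand_right hα hβ,
    MeasureTheory.integral_indicator measurableSet_Ioo, ← integral_Ioc_eq_integral_Ioo,
    ← integral_of_le hat] at h
  rw [h, intervalIntegral.integral_const_mul]

theorem rpow_sub_two_div_exp_le_Gamma {R y : ℝ} (hR : 1 ≤ R) (hy : 2 ≤ y) :
    R ^ (y - 2) / exp R ≤ Gamma y := by
  have hfloor : 2 ≤ ⌊y⌋₊ := Nat.le_floor (by exact_mod_cast hy)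
  obtain ⟨k, hk⟩ : ∃ k : ℕ, ⌊y⌋₊ = k + 1 := ⟨⌊y⌋₊ - 1, by omega⟩
  have hk1 : (1 : ℝ) ≤ k := by exact_mod_cast (by omega : 1 ≤ k)
  have hky : (k : ℝ) + 1 ≤ y := by exact_mod_cast hk ▸ Nat.floor_le (by linarith)
  have hyk : y < k + 2 := by
    have := Nat.lt_floor_add_one y
    rw [hk] at this
    push_cast at this
    linarith
  calc R ^ (y - 2) / exp R ≤ R ^ k / exp R := by
        rw [← rpow_natCast]
        exact div_le_div_of_nonneg_right (rpow_le_rpow_of_exponent_le hR (by linarith))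
          (exp_pos R).le
    _ ≤ k.factorial := by
        rw [div_le_iff₀ (exp_pos R), ← div_le_iff₀' (by positivity)]
        exact pow_div_factorial_le_exp R (by linarith) k
    _ = Gamma (k + 1) := (Gamma_nat_eq_factorial k).symm
    _ ≤ Gamma y := Gamma_strictMonoOn_Ici.monotoneOn
        (mem_Ici.2 (by linarith)) (mem_Ici.2 hy) hky

theorem summable_pow_div_Gamma_mul_add (hα : 0 < α) (β : ℝ) {x : ℝ} (hx : 0 ≤ x) :
    Summable fun k : ℕ => x ^ k / Gamma (k * α + β) := by
  obtain ⟨R, hRx, hR⟩ := (((tendsto_rpow_atTop hα).eventually_ge_atTop (2 * x)).and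
    (eventually_ge_atTop 1)).exists
  have hRα : 0 < R ^ α := by positivity
  have hy : ∀ᶠ k : ℕ in atTop, 2 ≤ k * α + β :=
    (tendsto_atTop_add_const_right _ β
      (tendsto_natCast_atTop_atTop.atTop_mul_const hα)).eventually_ge_atTop 2
  refine ((summable_geometric_two).mul_left (exp R / R ^ (β - 2))).of_norm_bounded_eventually_nat
    (hy.mono fun k hk => ?_)
  have hΓ := rpow_sub_two_div_exp_le_Gamma hR hk
  rw [norm_of_nonneg (div_nonneg (pow_nonneg hx k) (Gamma_pos_of_pos (by linarith)).le)]
  calc x ^ k / Gamma (k * α + β) ≤ x ^ k / (R ^ (k * α + β - 2) / exp R) :=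
        div_le_div_of_nonneg_left (pow_nonneg hx k) (by positivity) hΓ
    _ = exp R / R ^ (β - 2) * (x / R ^ α) ^ k := by
        rw [show k * α + β - 2 = α * k + (β - 2) by ring, rpow_add (by linarith),
          rpow_mul_natCast (by linarith)]
        rw [div_pow]
        field_simp
    _ ≤ exp R / R ^ (β - 2) * (1 / 2) ^ k := by
        have hxR : x / R ^ α ≤ 1 / 2 := by
          rw [div_le_iff₀ hRα]
          linarith
        exact mul_le_mul_of_nonneg_left (pow_le_pow_left₀ (by positivity) hxR k) (by positivity)

noncomputable def riemannLiouville (a β : ℝ) (f : ℝ → ℝ) (t : ℝ) : ℝ :=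
  (Gamma β)⁻¹ * ∫ s in a..t, (t - s) ^ (β - 1) * f s

theorem riemannLiouville_nonneg (hβ : 0 < β) (hat : a ≤ t)
    (hfnn : ∀ s ∈ Icc a t, 0 ≤ f s) :
    0 ≤ riemannLiouville a β f t :=
  mul_nonneg (inv_nonneg.2 (Gamma_pos_of_pos hβ).le) (integral_nonneg hat fun s hs =>
    mul_nonneg (rpow_nonneg (sub_nonneg.2 hs.2) _) (hfnn s hs))

theorem riemannLiouville_le_mul_rpow (hβ : 0 < β) (hat : a ≤ t) (hf : ContinuousOn f (Icc a t))
    {M : ℝ} (hfM : ∀ s ∈ Icc a t, f s ≤ M) :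
    riemannLiouville a β f t ≤ M * (t - a) ^ β / Gamma (β + 1) := by
  rw [riemannLiouville, Gamma_add_one hβ.ne', inv_mul_le_iff₀ (Gamma_pos_of_pos hβ)]
  calc ∫ s in a..t, (t - s) ^ (β - 1) * f s ≤ M * ((t - a) ^ β / β) :=
        integral_rpow_sub_mul_le hβ hat hf hfM
    _ = Gamma β * (M * (t - a) ^ β / (β * Gamma β)) := by
        field_simp [(Gamma_pos_of_pos hβ).ne']

theorem riemannLiouville_mono {g : ℝ → ℝ} (hβ : 0 < β) (hat : a ≤ t)
    (hf : IntervalIntegrable (fun s => (t - s) ^ (β - 1) * f s) volume a t)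
    (hg : IntervalIntegrable (fun s => (t - s) ^ (β - 1) * g s) volume a t)
    (hfg : ∀ s ∈ Icc a t, f s ≤ g s) :
    riemannLiouville a β f t ≤ riemannLiouville a β g t :=
  mul_le_mul_of_nonneg_left (integral_mono_on hat hf hg fun s hs =>
      mul_le_mul_of_nonneg_left (hfg s hs) (rpow_nonneg (sub_nonneg.2 hs.2) _))
    (inv_nonneg.2 (Gamma_pos_of_pos hβ).le)

theorem riemannLiouville_add_const_mul {g : ℝ → ℝ}
    (hf : IntervalIntegrable (fun s => (t - s) ^ (β - 1) * f s) volume a t)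
    (hg : IntervalIntegrable (fun s => (t - s) ^ (β - 1) * g s) volume a t) (c : ℝ) :
    riemannLiouville a β (fun s => f s + c * g s) t
      = riemannLiouville a β f t + c * riemannLiouville a β g t := by
  simp only [riemannLiouville, mul_add, mul_left_comm _ c]
  rw [integral_add hf (hg.const_mul c), intervalIntegral.integral_const_mul]
  ring

theorem intervalIntegrable_rpow_sub_mul_riemannLiouville (hα : 0 < α) (hβ : 0 < β)
    (hat : a ≤ t) (hf : ContinuousOn f (Icc a t)) (hfnn : ∀ s ∈ Icc a t, 0 ≤ f s) :
    IntervalIntegrable (fun s => (t - s) ^ (β - 1) * riemannLiouville a α f s) volume a t := by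
  simpa only [riemannLiouville, mul_left_comm _ (Gamma α)⁻¹] using
    (intervalIntegrable_rpow_sub_mul_integral hα hβ hat hf hfnn).const_mul (Gamma α)⁻¹

theorem riemannLiouville_riemannLiouville (hα : 0 < α) (hβ : 0 < β)
    (hat : a ≤ t) (hf : ContinuousOn f (Icc a t)) (hfnn : ∀ s ∈ Icc a t, 0 ≤ f s) :
    riemannLiouville a β (riemannLiouville a α f) t = riemannLiouville a (β + α) f t := by
  simp only [riemannLiouville, mul_left_comm _ (Gamma α)⁻¹]
  rw [intervalIntegral.integral_const_mul, integral_rpow_sub_mul_integral hα hβ hat hf hfnn]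
  field_simp [(Gamma_pos_of_pos hα).ne', (Gamma_pos_of_pos hβ).ne']

theorem intervalIntegral_tsum_of_nonneg {ι : Type*} [Countable ι] {F : ι → ℝ → ℝ}
    (hat : a ≤ t)
    (hF : ∀ i, IntervalIntegrable (F i) volume a t) (hFnn : ∀ i, ∀ s ∈ Ioc a t, 0 ≤ F i s)
    (hsum : Summable fun i => ∫ s in a..t, F i s) :
    ∫ s in a..t, ∑' i, F i s = ∑' i, ∫ s in a..t, F i s := by
  simp_rw [integral_of_le hat] at hsum ⊢
  refine (integral_tsum_of_summable_integral_norm (fun i => (hF i).1) (hsum.congr fun i => ?_)).symm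
  exact setIntegral_congr_fun measurableSet_Ioc fun s hs => (norm_of_nonneg (hFnn i s hs)).symm

section Gronwall

variable {u p : ℝ → ℝ} {Q : ℝ}

theorem riemannLiouville_le_of_le_add (hα : 0 < α) (hβ : 0 < β) (hat : a ≤ t)
    (hu : ContinuousOn u (Icc a t)) (hp : ContinuousOn p (Icc a t))
    (hunn : ∀ s ∈ Icc a t, 0 ≤ u s)
    (hle : ∀ s ∈ Icc a t, u s ≤ p s + Q * riemannLiouville a α u s) :
    riemannLiouville a β u t
      ≤ riemannLiouville a β p t + Q * riemannLiouville a (β + α) u t := by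
  have hKp := intervalIntegrable_rpow_sub_mul hβ hat hp
  have hKJu := intervalIntegrable_rpow_sub_mul_riemannLiouville hα hβ hat hu hunn
  calc riemannLiouville a β u t
      ≤ riemannLiouville a β (fun s => p s + Q * riemannLiouville a α u s) t :=
        riemannLiouville_mono hβ hat (intervalIntegrable_rpow_sub_mul hβ hat hu)
          (by simpa only [mul_add, mul_left_comm _ Q] using hKp.add (hKJu.const_mul Q)) hle
    _ = riemannLiouville a β p t + Q * riemannLiouville a (β + α) u t := by
        rw [riemannLiouville_add_const_mul hKp hKJu,
          riemannLiouville_riemannLiouville hα hβ hat hu hunn]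

theorem le_add_sum_riemannLiouville (hα : 0 < α)
    (hu : ContinuousOn u (Icc a t)) (hp : ContinuousOn p (Icc a t))
    (hunn : ∀ s ∈ Icc a t, 0 ≤ u s) (hQ : 0 ≤ Q)
    (hle : ∀ s ∈ Icc a t, u s ≤ p s + Q * riemannLiouville a α u s) (n : ℕ) :
    ∀ s ∈ Icc a t, u s ≤ p s
      + ∑ k ∈ Finset.range n, Q ^ (k + 1) * riemannLiouville a ((k + 1) * α) p s
      + Q ^ (n + 1) * riemannLiouville a ((n + 1) * α) u s := by
  induction n with
  | zero => simpa using hle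
  | succ n ih =>
    intro s hs
    have hsub : Icc a s ⊆ Icc a t := Icc_subset_Icc_right hs.2
    have hstep := riemannLiouville_le_of_le_add hα (β := (n + 1) * α) (by positivity) hs.1
      (hu.mono hsub) (hp.mono hsub) (fun r hr => hunn r (hsub hr)) fun r hr => hle r (hsub hr)
    rw [show ((n : ℝ) + 1) * α + α = ((n : ℝ) + 1 + 1) * α by ring] at hstep
    calc u s ≤ p s + ∑ k ∈ Finset.range n, Q ^ (k + 1) * riemannLiouville a ((k + 1) * α) p s
          + Q ^ (n + 1) * riemannLiouville a ((n + 1) * α) u s := ih s hs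
      _ ≤ p s + ∑ k ∈ Finset.range n, Q ^ (k + 1) * riemannLiouville a ((k + 1) * α) p s
          + Q ^ (n + 1) * (riemannLiouville a ((n + 1) * α) p s
            + Q * riemannLiouville a ((n + 1 + 1) * α) u s) := by gcongr
      _ = _ := by
        rw [Finset.sum_range_succ]
        push_cast
        ring

theorem summable_pow_mul_riemannLiouville (hα : 0 < α) (hat : a ≤ t)
    (hf : ContinuousOn f (Icc a t)) (hfnn : ∀ s ∈ Icc a t, 0 ≤ f s) (hQ : 0 ≤ Q) :
    Summable fun n : ℕ => Q ^ (n + 1) * riemannLiouville a ((n + 1) * α) f t := by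
  obtain ⟨M, hM⟩ := isCompact_Icc.exists_bound_of_continuousOn hf
  have hx : 0 ≤ Q * (t - a) ^ α := mul_nonneg hQ (rpow_nonneg (sub_nonneg.2 hat) _)
  refine Summable.of_nonneg_of_le (fun n => mul_nonneg (pow_nonneg hQ _)
    (riemannLiouville_nonneg (by positivity) hat hfnn)) (fun n => ?_)
    (((summable_nat_add_iff 1).2 (summable_pow_div_Gamma_mul_add hα 1 hx)).mul_left M)
  have hpow : (t - a) ^ (((n : ℝ) + 1) * α) = ((t - a) ^ α) ^ (n + 1) := by
    rw [← rpow_mul_natCast (sub_nonneg.2 hat)]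
    push_cast
    ring_nf
  calc Q ^ (n + 1) * riemannLiouville a ((n + 1) * α) f t
      ≤ Q ^ (n + 1) * (M * (t - a) ^ (((n : ℝ) + 1) * α) / Gamma ((n + 1) * α + 1)) :=
        mul_le_mul_of_nonneg_left (riemannLiouville_le_mul_rpow (by positivity) hat hf
          fun s hs => (le_abs_self _).trans (hM s hs)) (pow_nonneg hQ _)
    _ = M * ((Q * (t - a) ^ α) ^ (n + 1) / Gamma (((n + 1 : ℕ) : ℝ) * α + 1)) := by
        rw [hpow, mul_pow]
        push_cast
        ring

theorem le_add_tsum_riemannLiouville (hα : 0 < α) (hat : a ≤ t)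
    (hu : ContinuousOn u (Icc a t)) (hp : ContinuousOn p (Icc a t))
    (hunn : ∀ s ∈ Icc a t, 0 ≤ u s) (hpnn : ∀ s ∈ Icc a t, 0 ≤ p s) (hQ : 0 ≤ Q)
    (hle : ∀ s ∈ Icc a t, u s ≤ p s + Q * riemannLiouville a α u s) :
    u t ≤ p t + ∑' n : ℕ, Q ^ (n + 1) * riemannLiouville a ((n + 1) * α) p t := by
  have hsum := summable_pow_mul_riemannLiouville hα hat hp hpnn hQ
  have hrem := (summable_pow_mul_riemannLiouville hα hat hu hunn hQ).tendsto_atTop_zero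
  set S := ∑' k : ℕ, Q ^ (k + 1) * riemannLiouville a ((k + 1) * α) p t
  have hlim : Tendsto (fun n : ℕ => p t + S + Q ^ (n + 1) * riemannLiouville a ((n + 1) * α) u t)
      atTop (𝓝 (p t + S)) := by
    simpa using tendsto_const_nhds.add hrem
  refine ge_of_tendsto' hlim fun n => ?_
  have hpartial := hsum.sum_le_tsum (Finset.range n) fun k _ =>
    mul_nonneg (pow_nonneg hQ _) (riemannLiouville_nonneg (by positivity) hat hpnn)
  linarith [le_add_sum_riemannLiouville hα hu hp hunn hQ hle n t ⟨hat, le_rfl⟩]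

theorem integral_tsum_eq_tsum_riemannLiouville (hα : 0 < α) (hat : a ≤ t)
    (hf : ContinuousOn f (Icc a t)) (hfnn : ∀ s ∈ Icc a t, 0 ≤ f s) (hQ : 0 ≤ Q) :
    ∫ s in a..t, ∑' n : ℕ,
        Q ^ (n + 1) / Gamma ((n + 1) * α) * (t - s) ^ ((n + 1) * α - 1) * f s
      = ∑' n : ℕ, Q ^ (n + 1) * riemannLiouville a ((n + 1) * α) f t := by
  have hterm : ∀ n : ℕ, ∫ s in a..t, Q ^ (n + 1) / Gamma ((n + 1) * α)
      * (t - s) ^ ((n + 1) * α - 1) * f s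
      = Q ^ (n + 1) * riemannLiouville a ((n + 1) * α) f t := by
    intro n
    rw [riemannLiouville, ← intervalIntegral.integral_const_mul,
      ← intervalIntegral.integral_const_mul]
    congr 1 with s
    ring
  simp_rw [← hterm]
  refine intervalIntegral_tsum_of_nonneg hat (fun n => ?_) (fun n s hs => ?_) ?_
  · simpa only [mul_assoc] using (intervalIntegrable_rpow_sub_mul (by positivity) hat hf).const_mul
      (Q ^ (n + 1) / Gamma ((n + 1) * α))
  · exact mul_nonneg (mul_nonneg (div_nonneg (pow_nonneg hQ _)
      (Gamma_pos_of_pos (by positivity)).le) (rpow_nonneg (sub_nonneg.2 hs.2) _))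
      (hfnn s ⟨hs.1.le, hs.2⟩)
  · simpa only [hterm] using summable_pow_mul_riemannLiouville hα hat hf hfnn hQ

end Gronwall

theorem generalized_gronwall_general (a b α : ℝ) (hα : 0 < α)
    (p q u : ℝ → ℝ)
    (hp : ContinuousOn p (Icc a b))
    (hu : ContinuousOn u (Icc a b))
    (hpnn : ∀ t ∈ Icc a b, 0 ≤ p t) (hqnn : ∀ t ∈ Icc a b, 0 ≤ q t)
    (hunn : ∀ t ∈ Icc a b, 0 ≤ u t)
    (hqmono : MonotoneOn q (Ico a b))
    (hineq : ∀ t ∈ Ico a b,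
      u t ≤ p t + q t * ∫ s in a..t, (t - s) ^ (α - 1) * u s) :
    ∀ t ∈ Ico a b,
      u t ≤ p t + ∫ s in a..t, ∑' n : ℕ,
        (q t * Real.Gamma α) ^ (n + 1) / Real.Gamma ((n + 1) * α)
          * (t - s) ^ ((n + 1) * α - 1) * p s := by
  intro t ⟨hat, htb⟩
  have hsub : Icc a t ⊆ Icc a b := Icc_subset_Icc_right htb.le
  have hsub' : Icc a t ⊆ Ico a b := fun s hs => ⟨hs.1, hs.2.trans_lt htb⟩
  have htt : t ∈ Icc a t := ⟨hat, le_rfl⟩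
  have hQ : 0 ≤ q t * Gamma α := mul_nonneg (hqnn t (hsub htt)) (Gamma_pos_of_pos hα).le
  have hle : ∀ s ∈ Icc a t, u s ≤ p s + q t * Gamma α * riemannLiouville a α u s := by
    intro s hs
    have hint : 0 ≤ ∫ r in a..s, (s - r) ^ (α - 1) * u r := integral_nonneg hs.1 fun r hr =>
      mul_nonneg (rpow_nonneg (sub_nonneg.2 hr.2) _) (hunn r (hsub ⟨hr.1, hr.2.trans hs.2⟩))
    rw [riemannLiouville, mul_assoc, mul_inv_cancel_left₀ (Gamma_pos_of_pos hα).ne']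
    nlinarith [hineq s (hsub' hs), hqmono (hsub' hs) (hsub' htt) hs.2]
  rw [integral_tsum_eq_tsum_riemannLiouville hα hat (hp.mono hsub)
    (fun s hs => hpnn s (hsub hs)) hQ]
  exact le_add_tsum_riemannLiouville hα hat (hu.mono hsub) (hp.mono hsub)
    (fun s hs => hunn s (hsub hs)) (fun s hs => hpnn s (hsub hs)) hQ hle

/-- Generalized Gronwall inequality (Lemma 2). -/
theorem generalized_gronwall (a b α : ℝ) (hα : 0 < α)
    (p q u : ℝ → ℝ)
    (hp : ContinuousOn p (Icc a b)) (hq : ContinuousOn q (Icc a b))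
    (hu : ContinuousOn u (Icc a b))
    (hpnn : ∀ t ∈ Icc a b, 0 ≤ p t) (hqnn : ∀ t ∈ Icc a b, 0 ≤ q t)
    (hunn : ∀ t ∈ Icc a b, 0 ≤ u t)
    (hqmono : MonotoneOn q (Ico a b))
    (hineq : ∀ t ∈ Ico a b,
      u t ≤ p t + q t * ∫ s in a..t, (t - s) ^ (α - 1) * u s) :
    ∀ t ∈ Ico a b,
      u t ≤ p t + ∫ s in a..t, ∑' n : ℕ,
        (q t * Real.Gamma α) ^ (n + 1) / Real.Gamma ((n + 1) * α)
          * (t - s) ^ ((n + 1) * α - 1) * p s :=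
  generalized_gronwall_general a b α hα p q u hp hu hpnn hqnn hunn hqmono hineq
end

section
/- Let α ∈ (0, 1], K, M ≥ 0, and let u : [a, b] → ℝ be a non-negative continuous function satisfying u(t) ≤ M θ^α / Γ(α+1) + (K/Γ(α)) ∫_a^t (t−s)^{α−1} u(s) ds for all t ∈ [a, b] and some θ ≥ 0. Then u(t) ≤ (M θ^α / Γ(α+1)) · E_{α,1}(K (b−a)^α) for all t ∈ [a, b], where E_{α,1}(z) = Σ_{k=0}^∞ z^k / Γ(kα + 1) is the Mittag-Leffler function. In particular, u converges uniformly to 0 as θ → 0. -/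
open MeasureTheory Set intervalIntegral

lemma betaReal (p q : ℝ) (hp : 0 < p) (hq : 0 < q) :
    ∫ x in (0:ℝ)..1, x ^ (p - 1) * (1 - x) ^ (q - 1)
      = Real.Gamma p * Real.Gamma q / Real.Gamma (p + q) := by
  have h := Complex.Gamma_mul_Gamma_eq_betaIntegral (s := (p : ℂ)) (t := (q : ℂ))
    (by simpa using hp) (by simpa using hq)
  have hB : Complex.betaIntegral (p : ℂ) (q : ℂ)
      = ((∫ x in (0:ℝ)..1, x ^ (p - 1) * (1 - x) ^ (q - 1) : ℝ) : ℂ) := by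
    rw [Complex.betaIntegral, ← intervalIntegral.integral_ofReal]
    apply intervalIntegral.integral_congr
    intro x hx
    rw [uIcc_of_le (by norm_num)] at hx
    show _ = ((_ : ℝ) : ℂ)
    rw [Complex.ofReal_mul, Complex.ofReal_cpow hx.1 (p - 1),
      Complex.ofReal_cpow (by linarith [hx.2]) (q - 1)]
    push_cast
    ring
  rw [hB] at h
  have h2 : Real.Gamma p * Real.Gamma q
      = Real.Gamma (p + q) * ∫ x in (0:ℝ)..1, x ^ (p - 1) * (1 - x) ^ (q - 1) := by
    rw [show ((p:ℂ) + q) = ((p + q : ℝ) : ℂ) by push_cast; ring] at h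
    rw [Complex.Gamma_ofReal, Complex.Gamma_ofReal, Complex.Gamma_ofReal] at h
    exact_mod_cast h
  have hΓ : Real.Gamma (p + q) ≠ 0 := (Real.Gamma_pos_of_pos (by linarith)).ne'
  rw [eq_div_iff hΓ]
  linarith [h2]

lemma kernelIntegrable (a t r : ℝ) (hr : -1 < r) :
    IntervalIntegrable (fun s => (t - s) ^ r) volume a t := by
  have h := (intervalIntegral.intervalIntegrable_rpow' (a := 0) (b := t - a) hr).comp_sub_left t
  simpa using h.symm

lemma convIntegral (a t p q : ℝ) (hat : a < t) (hp : 0 < p) (hq : 0 < q) :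
    ∫ s in a..t, (t - s) ^ (p - 1) * (s - a) ^ (q - 1)
      = Real.Gamma p * Real.Gamma q / Real.Gamma (p + q) * (t - a) ^ (p + q - 1) := by
  have hT : 0 < t - a := by linarith
  set f : ℝ → ℝ := fun s => (t - s) ^ (p - 1) * (s - a) ^ (q - 1) with hf
  have h1 : ∫ x in (0:ℝ)..(t - a), f (a + x) = ∫ s in a..t, f s := by
    rw [intervalIntegral.integral_comp_add_left f a]
    congr 1 <;> ring
  have h2 : ∫ y in (0:ℝ)..1, f (a + (t - a) * y)
      = (t - a)⁻¹ • ∫ x in (0:ℝ)..(t - a), f (a + x) := by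
    rw [intervalIntegral.integral_comp_mul_left (fun x => f (a + x)) hT.ne']
    congr 1 <;> ring
  have h3 : ∫ y in (0:ℝ)..1, f (a + (t - a) * y)
      = (t - a) ^ (p - 1) * (t - a) ^ (q - 1)
        * ∫ y in (0:ℝ)..1, y ^ (q - 1) * (1 - y) ^ (p - 1) := by
    rw [← intervalIntegral.integral_const_mul]
    apply intervalIntegral.integral_congr
    intro y hy
    rw [uIcc_of_le (by norm_num)] at hy
    have hy0 : 0 ≤ y := hy.1
    have hy1 : 0 ≤ 1 - y := by linarith [hy.2]
    show f (a + (t - a) * y) = _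
    rw [hf]
    show (t - (a + (t - a) * y)) ^ (p - 1) * (a + (t - a) * y - a) ^ (q - 1) = _
    rw [show t - (a + (t - a) * y) = (t - a) * (1 - y) by ring,
      show a + (t - a) * y - a = (t - a) * y by ring,
      Real.mul_rpow hT.le hy1, Real.mul_rpow hT.le hy0]
    ring
  have hpow : (t - a) * ((t - a) ^ (p - 1) * (t - a) ^ (q - 1)) = (t - a) ^ (p + q - 1) := by
    calc (t - a) * ((t - a) ^ (p - 1) * (t - a) ^ (q - 1))
        = (t - a) ^ (1:ℝ) * (t - a) ^ (p - 1 + (q - 1)) := by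
          rw [Real.rpow_one, ← Real.rpow_add hT]
      _ = (t - a) ^ (1 + (p - 1 + (q - 1))) := (Real.rpow_add hT _ _).symm
      _ = (t - a) ^ (p + q - 1) := by ring_nf
  have h4 : ∫ s in a..t, f s = (t - a) • ∫ y in (0:ℝ)..1, f (a + (t - a) * y) := by
    rw [h2, ← h1, smul_smul, mul_inv_cancel₀ hT.ne', one_smul]
  rw [h4, h3, betaReal q p hq hp, smul_eq_mul, show q + p = p + q by ring]
  calc (t - a) * ((t - a) ^ (p - 1) * (t - a) ^ (q - 1)
        * (Real.Gamma q * Real.Gamma p / Real.Gamma (p + q)))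
      = Real.Gamma p * Real.Gamma q / Real.Gamma (p + q)
        * ((t - a) * ((t - a) ^ (p - 1) * (t - a) ^ (q - 1))) := by ring
    _ = Real.Gamma p * Real.Gamma q / Real.Gamma (p + q) * (t - a) ^ (p + q - 1) := by
        rw [hpow]

lemma ML_summable {α β : ℝ} (hα : 0 < α) (hβ : 1 ≤ β) {z : ℝ} (hz : 0 ≤ z) :
    Summable (fun k : ℕ => z ^ k / Real.Gamma (k * α + β)) := by
  obtain ⟨N, hN1, hNα⟩ : ∃ N : ℕ, 1 ≤ N ∧ 1 ≤ (N : ℝ) * α := by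
    refine ⟨⌈1 / α⌉₊, Nat.one_le_ceil_iff.mpr (by positivity), ?_⟩
    have h := Nat.le_ceil (1 / α)
    rw [div_le_iff₀ hα] at h
    exact h
  haveI : NeZero N := ⟨by omega⟩
  have hprod : Summable (fun p : ℕ × Fin N =>
      ((z ^ N) ^ p.1 / Nat.factorial p.1) * z ^ (p.2 : ℕ)) := by
    refine Summable.mul_of_nonneg (Real.summable_pow_div_factorial (z ^ N))
      (g := fun r : Fin N => z ^ (r : ℕ)) (summable_of_finite_support (Set.toFinite _))
      (fun j => by positivity) (fun r => by positivity)
  have hg : Summable (fun k : ℕ => z ^ k / Nat.factorial (k / N)) := by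
    have hcomp : ((fun k : ℕ => z ^ k / Nat.factorial (k / N)) ∘ (Nat.divModEquiv N).symm)
        = fun p : ℕ × Fin N => ((z ^ N) ^ p.1 / Nat.factorial p.1) * z ^ (p.2 : ℕ) := by
      funext p
      simp only [Function.comp, Nat.divModEquiv_symm_apply]
      have h1 : (p.1 * N + (p.2 : ℕ)) / N = p.1 := by
        rw [Nat.mul_comm, Nat.mul_add_div (Nat.pos_of_neZero N), Nat.div_eq_of_lt p.2.is_lt]
        omega
      rw [h1, pow_add, pow_mul]
      ring
    exact ((Nat.divModEquiv N).symm.summable_iff).mp (hcomp ▸ hprod)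
  have key : ∀ m : ℕ, N ≤ m → (Nat.factorial (m / N) : ℝ) ≤ Real.Gamma (↑m * α + β) := by
    intro m hm
    set j := m / N with hj
    have hj1 : 1 ≤ j := (Nat.one_le_div_iff (Nat.pos_of_neZero N)).mpr hm
    have hjm : (j : ℝ) ≤ (m : ℝ) * α := by
      have h1 : (j * N : ℕ) ≤ m := Nat.div_mul_le_self m N
      have h2 : ((j : ℝ) * N) * α ≤ (m : ℝ) * α := by
        apply mul_le_mul_of_nonneg_right _ hα.le
        exact_mod_cast h1
      calc (j : ℝ) = (j : ℝ) * 1 := by ring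
        _ ≤ (j : ℝ) * ((N : ℝ) * α) := by
            apply mul_le_mul_of_nonneg_left hNα (by positivity)
        _ ≤ (m : ℝ) * α := by linarith [h2]
    have hj1' : (1 : ℝ) ≤ j := by exact_mod_cast hj1
    calc (Nat.factorial j : ℝ) = Real.Gamma (j + 1) := (Real.Gamma_nat_eq_factorial j).symm
      _ ≤ Real.Gamma ((m : ℝ) * α + β) :=
          Real.Gamma_strictMonoOn_Ici.monotoneOn (by simp only [mem_Ici]; linarith)
            (by simp only [mem_Ici]; linarith) (by linarith)
  refine (summable_nat_add_iff N).mp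
    (Summable.of_nonneg_of_le ?_ ?_ ((summable_nat_add_iff N).mpr hg))
  · intro k
    have h1 : (0:ℝ) ≤ (↑(k + N) : ℝ) * α := by positivity
    have : (0:ℝ) < Real.Gamma (↑(k + N) * α + β) := Real.Gamma_pos_of_pos (by linarith)
    positivity
  · intro k
    apply div_le_div_of_nonneg_left (by positivity) _ (key (k + N) (by omega))
    exact_mod_cast Nat.factorial_pos _

lemma ML_integral_eq (a α K : ℝ) (hα0 : 0 < α) (hα1 : α ≤ 1) (hK : 0 ≤ K)
    (t : ℝ) (hat : a ≤ t) :
    (K / Real.Gamma α) * ∫ s in a..t, (t - s) ^ (α - 1) *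
        ∑' k : ℕ, (K * (s - a) ^ α) ^ k / Real.Gamma (k * α + 1)
      = (∑' k : ℕ, (K * (t - a) ^ α) ^ k / Real.Gamma (k * α + 1)) - 1 := by
  have hΓα : 0 < Real.Gamma α := Real.Gamma_pos_of_pos hα0
  have hΓk : ∀ k : ℕ, 0 < Real.Gamma ((k:ℝ) * α + 1) := by
    intro k
    apply Real.Gamma_pos_of_pos
    have : (0:ℝ) ≤ (k:ℝ) * α := by positivity
    linarith
  have hΓk2 : ∀ k : ℕ, 0 < Real.Gamma ((k:ℝ) * α + (α + 1)) := by
    intro k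
    apply Real.Gamma_pos_of_pos
    have : (0:ℝ) ≤ (k:ℝ) * α := by positivity
    linarith
  rcases eq_or_lt_of_le hat with rfl | hat'
  · rw [intervalIntegral.integral_same, mul_zero]
    have h1 : ∑' k : ℕ, (K * (a - a) ^ α) ^ k / Real.Gamma (k * α + 1) = 1 := by
      rw [tsum_eq_single 0]
      · norm_num [Real.Gamma_one]
      · intro k hk
        rw [show a - a = 0 by ring, Real.zero_rpow hα0.ne', mul_zero, zero_pow hk]
        simp
    rw [h1]; ring
  · have hT : 0 < t - a := by linarith
    set z : ℝ := K * (t - a) ^ α with hz_def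
    have hz0 : 0 ≤ z := mul_nonneg hK (Real.rpow_nonneg hT.le _)
    have hterm_cont : ∀ k : ℕ, Continuous
        (fun s : ℝ => (K * (s - a) ^ α) ^ k / Real.Gamma (k * α + 1)) := by
      intro k
      apply Continuous.div_const
      exact (continuous_const.mul ((continuous_id.sub continuous_const).rpow_const
        (fun x => Or.inr hα0.le))).pow k
    have hzs : ∀ s ∈ Icc a t, 0 ≤ K * (s - a) ^ α := fun s hs =>
      mul_nonneg hK (Real.rpow_nonneg (by linarith [hs.1]) _)
    have hzb : ∀ s ∈ Icc a t, K * (s - a) ^ α ≤ z := by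
      intro s hs
      exact mul_le_mul_of_nonneg_left
        (Real.rpow_le_rpow (by linarith [hs.1]) (by linarith [hs.2]) hα0.le) hK
    have hsumt : Summable (fun k : ℕ => z ^ k / Real.Gamma (k * α + 1)) :=
      ML_summable hα0 le_rfl hz0
    set fk : ℕ → ℝ → ℝ := fun k s =>
      (t - s) ^ (α - 1) * ((K * (s - a) ^ α) ^ k / Real.Gamma (k * α + 1)) with hfk_def
    have hker : IntervalIntegrable (fun s => (t - s) ^ (α - 1)) volume a t :=
      kernelIntegrable a t _ (by linarith)
    have hint_k : ∀ k, IntervalIntegrable (fk k) volume a t := fun k =>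
      hker.mul_continuousOn (hterm_cont k).continuousOn
    have hIk : ∀ k : ℕ, ∫ s in a..t, fk k s
        = Real.Gamma α * (t - a) ^ α * (z ^ k / Real.Gamma (k * α + (α + 1))) := by
      intro k
      have hq1 : (0:ℝ) < (k:ℝ) * α + 1 := by
        have : (0:ℝ) ≤ (k:ℝ) * α := by positivity
        linarith
      have step1 : ∫ s in a..t, fk k s
          = (K ^ k / Real.Gamma ((k:ℝ) * α + 1))
            * ∫ s in a..t, (t - s) ^ (α - 1) * (s - a) ^ (((k:ℝ) * α + 1) - 1) := by
        rw [← intervalIntegral.integral_const_mul]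
        apply intervalIntegral.integral_congr
        intro s hs
        rw [uIcc_of_le hat] at hs
        have hsa : (0:ℝ) ≤ s - a := by linarith [hs.1]
        show (t - s) ^ (α - 1) * ((K * (s - a) ^ α) ^ k / Real.Gamma ((k:ℝ) * α + 1)) = _
        rw [mul_pow, ← Real.rpow_natCast ((s - a) ^ α) k, ← Real.rpow_mul hsa]
        rw [show α * (k:ℝ) = ((k:ℝ) * α + 1) - 1 by ring]
        ring
      rw [step1, convIntegral a t α ((k:ℝ) * α + 1) hat' hα0 hq1]
      have e1 : α + ((k:ℝ) * α + 1) = (k:ℝ) * α + (α + 1) := by ring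
      have e2 : (t - a) ^ ((k:ℝ) * α + (α + 1) - 1) = (t - a) ^ α * ((t - a) ^ α) ^ k := by
        rw [← Real.rpow_natCast ((t - a) ^ α) k, ← Real.rpow_mul hT.le, ← Real.rpow_add hT]
        congr 1; ring
      rw [e1, e2, hz_def, mul_pow]
      field_simp
    have hSI : Summable (fun k : ℕ =>
        Real.Gamma α * (t - a) ^ α * (z ^ k / Real.Gamma (k * α + (α + 1)))) :=
      (ML_summable hα0 (by linarith : (1:ℝ) ≤ α + 1) hz0).mul_left _
    have hnnI : ∀ k : ℕ,
        0 ≤ Real.Gamma α * (t - a) ^ α * (z ^ k / Real.Gamma (k * α + (α + 1))) := by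
      intro k
      exact mul_nonneg (mul_nonneg hΓα.le (Real.rpow_nonneg hT.le _))
        (div_nonneg (pow_nonneg hz0 k) (hΓk2 k).le)
    have hmeas : ∀ k, AEStronglyMeasurable (fk k) (volume.restrict (Ioc a t)) := fun k =>
      ((hint_k k).1).aestronglyMeasurable
    have hnnfk : ∀ k, 0 ≤ᵐ[volume.restrict (Ioc a t)] fk k := by
      intro k
      rw [Filter.EventuallyLE, MeasureTheory.ae_restrict_iff' measurableSet_Ioc]
      refine Filter.Eventually.of_forall (fun s hs => ?_)
      have h1 : (0:ℝ) ≤ (t - s) ^ (α - 1) := Real.rpow_nonneg (by linarith [hs.2]) _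
      have h2 : (0:ℝ) ≤ (K * (s - a) ^ α) ^ k / Real.Gamma ((k:ℝ) * α + 1) :=
        div_nonneg (pow_nonneg (hzs s ⟨hs.1.le, hs.2⟩) k) (hΓk k).le
      simpa using mul_nonneg h1 h2
    have hfin : ∑' k, ∫⁻ s in Ioc a t, ‖fk k s‖₊ ∂volume ≠ ⊤ := by
      have heq : ∀ k, ∫⁻ s in Ioc a t, ‖fk k s‖₊ ∂volume
          = ENNReal.ofReal (Real.Gamma α * (t - a) ^ α
              * (z ^ k / Real.Gamma (k * α + (α + 1)))) := by
        intro k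
        rw [← hIk k, intervalIntegral.integral_of_le hat,
          MeasureTheory.ofReal_integral_eq_lintegral_ofReal (hint_k k).1 (hnnfk k)]
        apply MeasureTheory.lintegral_congr_ae
        filter_upwards [hnnfk k] with s hs
        exact Real.enorm_eq_ofReal hs
      rw [tsum_congr heq, ← ENNReal.ofReal_tsum_of_nonneg hnnI hSI]
      exact ENNReal.ofReal_ne_top
    have hswap : (∫ s in a..t, (t - s) ^ (α - 1) *
          ∑' k : ℕ, (K * (s - a) ^ α) ^ k / Real.Gamma (k * α + 1))
        = ∑' k : ℕ, ∫ s in a..t, fk k s := by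
      have hpt : ∀ s : ℝ, (t - s) ^ (α - 1) *
          (∑' k : ℕ, (K * (s - a) ^ α) ^ k / Real.Gamma (k * α + 1)) = ∑' k : ℕ, fk k s := by
        intro s
        rw [← tsum_mul_left]
      simp_rw [hpt]
      rw [intervalIntegral.integral_of_le hat, MeasureTheory.integral_tsum hmeas hfin]
      exact tsum_congr fun k => (intervalIntegral.integral_of_le hat).symm
    have hqI : ∀ k : ℕ, (K / Real.Gamma α)
        * (Real.Gamma α * (t - a) ^ α * (z ^ k / Real.Gamma (k * α + (α + 1))))
        = z ^ (k + 1) / Real.Gamma ((k + 1 : ℕ) * α + 1) := by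
      intro k
      have e3 : ((k + 1 : ℕ) : ℝ) * α + 1 = (k:ℝ) * α + (α + 1) := by push_cast; ring
      rw [e3, pow_succ, hz_def]
      field_simp
    rw [hswap, tsum_mul_left.symm]
    calc ∑' k : ℕ, (K / Real.Gamma α) * ∫ s in a..t, fk k s
        = ∑' k : ℕ, z ^ (k + 1) / Real.Gamma ((k + 1 : ℕ) * α + 1) :=
          tsum_congr fun k => by rw [hIk k, hqI k]
      _ = (∑' k : ℕ, z ^ k / Real.Gamma (k * α + 1)) - 1 := by
          rw [Summable.tsum_eq_zero_add hsumt]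
          have h0 : z ^ (0:ℕ) / Real.Gamma ((0:ℕ) * α + 1) = 1 := by
            norm_num [Real.Gamma_one]
          rw [h0]
          push_cast
          ring

/-- Mittag-Leffler bound obtained from the generalized Gronwall inequality
with constant `p(t) = Mθ^α/Γ(α+1)` and `q(t) = K/Γ(α)`. -/
theorem gronwall_mittag_leffler_bound (a b α K M θ : ℝ)
    (hα : α ∈ Ioc (0 : ℝ) 1) (hK : 0 ≤ K) (hM : 0 ≤ M) (hθ : 0 ≤ θ)
    (hab : a ≤ b) (u : ℝ → ℝ) (hu : ContinuousOn u (Icc a b))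
    (hunn : ∀ t ∈ Icc a b, 0 ≤ u t)
    (hineq : ∀ t ∈ Icc a b,
      u t ≤ M * θ ^ α / Real.Gamma (α + 1)
        + (K / Real.Gamma α) * ∫ s in a..t, (t - s) ^ (α - 1) * u s) :
    ∀ t ∈ Icc a b,
      u t ≤ M * θ ^ α / Real.Gamma (α + 1)
        * ∑' k : ℕ, (K * (b - a) ^ α) ^ k / Real.Gamma (k * α + 1) := by
  obtain ⟨hα0, hα1⟩ := hα
  have hΓα : 0 < Real.Gamma α := Real.Gamma_pos_of_pos hα0
  have hΓα1 : 0 < Real.Gamma (α + 1) := Real.Gamma_pos_of_pos (by linarith)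
  set c : ℝ := M * θ ^ α / Real.Gamma (α + 1) with hc_def
  have hc : 0 ≤ c := div_nonneg (mul_nonneg hM (Real.rpow_nonneg hθ α)) hΓα1.le
  set g : ℝ → ℝ := fun t => ∑' k : ℕ, (K * (t - a) ^ α) ^ k / Real.Gamma (k * α + 1)
    with hg_def
  have hΓk : ∀ k : ℕ, 0 < Real.Gamma ((k:ℝ) * α + 1) := by
    intro k
    apply Real.Gamma_pos_of_pos
    have : (0:ℝ) ≤ (k:ℝ) * α := by positivity
    linarith
  have hzt : ∀ t ∈ Icc a b, 0 ≤ K * (t - a) ^ α := fun t ht =>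
    mul_nonneg hK (Real.rpow_nonneg (by linarith [ht.1]) _)
  have hzb : ∀ t ∈ Icc a b, K * (t - a) ^ α ≤ K * (b - a) ^ α := fun t ht =>
    mul_le_mul_of_nonneg_left
      (Real.rpow_le_rpow (by linarith [ht.1]) (by linarith [ht.2]) hα0.le) hK
  have htermnn : ∀ t ∈ Icc a b, ∀ k : ℕ,
      0 ≤ (K * (t - a) ^ α) ^ k / Real.Gamma (k * α + 1) :=
    fun t ht k => div_nonneg (pow_nonneg (hzt t ht) k) (hΓk k).le
  have hsum : ∀ t ∈ Icc a b,
      Summable (fun k : ℕ => (K * (t - a) ^ α) ^ k / Real.Gamma (k * α + 1)) :=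
    fun t ht => ML_summable hα0 le_rfl (hzt t ht)
  have hsumb : Summable (fun k : ℕ => (K * (b - a) ^ α) ^ k / Real.Gamma (k * α + 1)) :=
    hsum b ⟨hab, le_rfl⟩
  have hterm_cont : ∀ k : ℕ,
      Continuous (fun s : ℝ => (K * (s - a) ^ α) ^ k / Real.Gamma (k * α + 1)) := by
    intro k
    apply Continuous.div_const
    exact (continuous_const.mul ((continuous_id.sub continuous_const).rpow_const
      (fun x => Or.inr hα0.le))).pow k
  have hgcont : ContinuousOn g (Icc a b) := by
    apply continuousOn_tsum (fun k => (hterm_cont k).continuousOn) hsumb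
    intro k t ht
    rw [Real.norm_eq_abs, abs_of_nonneg (htermnn t ht k)]
    have hp := hΓk k
    gcongr
    all_goals first
      | exact hzt t ht
      | exact hzb t ht
      | linarith [ht.1]
      | linarith [ht.2]
      | exact hα0.le
      | exact hK
  have hg1 : ∀ t ∈ Icc a b, 1 ≤ g t := by
    intro t ht
    have h0 : (K * (t - a) ^ α) ^ (0:ℕ) / Real.Gamma ((0:ℕ) * α + 1) = 1 := by
      norm_num [Real.Gamma_one]
    calc (1:ℝ) = (K * (t - a) ^ α) ^ (0:ℕ) / Real.Gamma ((0:ℕ) * α + 1) := h0.symm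
      _ ≤ g t := Summable.le_tsum (hsum t ht) 0 (fun j _ => htermnn t ht j)
  have hgeq : ∀ t ∈ Icc a b,
      (K / Real.Gamma α) * (∫ s in a..t, (t - s) ^ (α - 1) * g s) = g t - 1 :=
    fun t ht => ML_integral_eq a α K hα0 hα1 hK t ht.1
  have hqnn : 0 ≤ K / Real.Gamma α := div_nonneg hK hΓα.le
  have hintu : ∀ t ∈ Icc a b,
      IntervalIntegrable (fun s => (t - s) ^ (α - 1) * u s) volume a t := by
    intro t ht
    apply (kernelIntegrable a t _ (by linarith : (-1:ℝ) < α - 1)).mul_continuousOn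
    apply hu.mono
    rw [uIcc_of_le ht.1]
    exact Icc_subset_Icc le_rfl ht.2
  have hua : u a ≤ c := by
    have h := hineq a ⟨le_refl a, hab⟩
    simpa using h
  have main : ∀ δ, 0 < δ → ∀ t ∈ Icc a b, u t < (c + δ) * g t := by
    intro δ hδ
    by_contra hcon
    push_neg at hcon
    obtain ⟨t₀, ht₀, ht₀'⟩ := hcon
    set S : Set ℝ := Icc a b ∩ (fun t => (c + δ) * g t - u t) ⁻¹' Iic 0 with hS_def
    have hfc : ContinuousOn (fun t => (c + δ) * g t - u t) (Icc a b) :=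
      (continuousOn_const.mul hgcont).sub hu
    have hSclosed : IsClosed S := hfc.preimage_isClosed_of_isClosed isClosed_Icc isClosed_Iic
    have hSne : S.Nonempty := ⟨t₀, ht₀, by simp only [mem_preimage, mem_Iic]; linarith⟩
    have hSbdd : BddBelow S := BddBelow.mono inter_subset_left bddBelow_Icc
    set m := sInf S with hm_def
    have hmS : m ∈ S := hSclosed.csInf_mem hSne hSbdd
    have hmab : m ∈ Icc a b := hmS.1
    have hmgu : (c + δ) * g m ≤ u m := by
      have h := hmS.2
      simp only [mem_preimage, mem_Iic] at h
      linarith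
    have ham : a < m := by
      rcases eq_or_lt_of_le hmab.1 with heq | h
      · exfalso
        have h1 : 1 ≤ g m := hg1 m hmab
        have h2 : (c + δ) * 1 ≤ (c + δ) * g m := mul_le_mul_of_nonneg_left h1 (by linarith)
        have h3 : u m ≤ c := heq ▸ hua
        linarith
      · exact h
    have hlt : ∀ s, a ≤ s → s < m → u s ≤ (c + δ) * g s := by
      intro s hs1 hs2
      have hsb : s ∈ Icc a b := ⟨hs1, le_trans hs2.le hmab.2⟩
      by_contra h
      push_neg at h
      have hmem : s ∈ S := ⟨hsb, by simp only [mem_preimage, mem_Iic]; linarith⟩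
      have hcs := csInf_le hSbdd hmem
      rw [← hm_def] at hcs
      linarith
    have hintg : IntervalIntegrable
        (fun s => (m - s) ^ (α - 1) * ((c + δ) * g s)) volume a m := by
      apply (kernelIntegrable a m _ (by linarith : (-1:ℝ) < α - 1)).mul_continuousOn
      apply ContinuousOn.mul continuousOn_const
      apply hgcont.mono
      rw [uIcc_of_le hmab.1]
      exact Icc_subset_Icc le_rfl hmab.2
    have hsing : ∀ᵐ (s : ℝ) ∂volume, s ≠ m := by
      rw [MeasureTheory.ae_iff]
      have he : {s : ℝ | ¬ s ≠ m} = {m} := by ext x; simp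
      rw [he]
      exact MeasureTheory.measure_singleton m
    have hae : (fun s => (m - s) ^ (α - 1) * u s) ≤ᵐ[volume.restrict (Icc a m)]
        (fun s => (m - s) ^ (α - 1) * ((c + δ) * g s)) := by
      rw [Filter.EventuallyLE, MeasureTheory.ae_restrict_iff' measurableSet_Icc]
      filter_upwards [hsing] with s hsne hsmem
      have h1 : u s ≤ (c + δ) * g s := hlt s hsmem.1 (lt_of_le_of_ne hsmem.2 hsne)
      have h2 : (0:ℝ) ≤ (m - s) ^ (α - 1) := Real.rpow_nonneg (by linarith [hsmem.2]) _
      exact mul_le_mul_of_nonneg_left h1 h2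
    have hmono := intervalIntegral.integral_mono_ae_restrict ham.le (hintu m hmab) hintg hae
    have hconst : (∫ s in a..m, (m - s) ^ (α - 1) * ((c + δ) * g s))
        = (c + δ) * ∫ s in a..m, (m - s) ^ (α - 1) * g s := by
      rw [← intervalIntegral.integral_const_mul]
      apply intervalIntegral.integral_congr
      intro s _
      ring
    have h1 := hineq m hmab
    have h3 := hgeq m hmab
    have h2 : (K / Real.Gamma α) * (∫ s in a..m, (m - s) ^ (α - 1) * u s)
        ≤ (K / Real.Gamma α) * ((c + δ) * ∫ s in a..m, (m - s) ^ (α - 1) * g s) :=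
      mul_le_mul_of_nonneg_left (le_of_le_of_eq hmono hconst) hqnn
    have h4 : u m ≤ c + (c + δ) * ((K / Real.Gamma α) * ∫ s in a..m, (m - s) ^ (α - 1) * g s) := by
      calc u m ≤ c + (K / Real.Gamma α) * ∫ s in a..m, (m - s) ^ (α - 1) * u s := h1
        _ ≤ c + (K / Real.Gamma α) * ((c + δ) * ∫ s in a..m, (m - s) ^ (α - 1) * g s) := by
            linarith
        _ = c + (c + δ) * ((K / Real.Gamma α) * ∫ s in a..m, (m - s) ^ (α - 1) * g s) := by
            ring
    rw [h3] at h4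
    have h5 : c + (c + δ) * (g m - 1) = (c + δ) * g m - δ := by ring
    linarith
  intro t ht
  have hle : u t ≤ c * g t := by
    by_contra hcontra
    push_neg at hcontra
    have hg1t : 1 ≤ g t := hg1 t ht
    have hδ : 0 < (u t - c * g t) / (2 * g t) := div_pos (by linarith) (by linarith)
    have hmain := main _ hδ t ht
    have hexp : (c + (u t - c * g t) / (2 * g t)) * g t = c * g t + (u t - c * g t) / 2 := by
      field_simp
    rw [hexp] at hmain
    linarith
  have hgb : g t ≤ ∑' k : ℕ, (K * (b - a) ^ α) ^ k / Real.Gamma (k * α + 1) := by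
    apply Summable.tsum_le_tsum _ (hsum t ht) hsumb
    intro k
    have hp := hΓk k
    gcongr
    all_goals first
      | exact hzt t ht
      | exact hzb t ht
      | linarith [ht.1]
      | linarith [ht.2]
      | exact hα0.le
      | exact hK
  calc u t ≤ c * g t := hle
    _ ≤ c * ∑' k : ℕ, (K * (b - a) ^ α) ^ k / Real.Gamma (k * α + 1) :=
        mul_le_mul_of_nonneg_left hgb hc
end

section
/- For every α > 0 and every z ∈ ℝ, the series Σ_{n=1}^∞ z^n (t−s)^{nα−1} / Γ(nα) appearing in the generalized Gronwall inequality converges for all s < t, and its integral ∫_a^t Σ_{n=1}^∞ z^n (t−s)^{nα−1}/Γ(nα) ds equals E_{α,1}(z (t−a)^α) − 1, where E_{α,1}(w) = Σ_{k=0}^∞ w^k/Γ(kα+1). -/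
open MeasureTheory Set intervalIntegral

section aux
open Real Filter

lemma gamma_ratio_lower (α : ℝ) (hα : 0 < α) {y : ℝ} (hy : 2 ≤ y) :
    Real.Gamma y * (y - 1 + min α 1) ^ (min α 1) ≤ Real.Gamma (y + α) := by
  set β := min α 1 with hβdef
  have hβ0 : 0 < β := lt_min hα one_pos
  have hβ1 : β ≤ 1 := min_le_right _ _
  have hβα : β ≤ α := min_le_left _ _
  have hx0 : 0 < y - 1 + β := by linarith
  have hy0 : 0 < y := by linarith
  have hyβ : 0 < y + β := by linarith
  have hcvx := Real.convexOn_log_Gamma.2 (x := y - 1 + β) (y := y + β)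
    (by simp only [mem_Ioi]; linarith) (by simp only [mem_Ioi]; linarith)
    hβ0.le (by linarith : (0:ℝ) ≤ 1 - β) (by ring)
  rw [show β • (y - 1 + β) + (1 - β) • (y + β) = y by simp only [smul_eq_mul]; ring] at hcvx
  simp only [Function.comp_apply, smul_eq_mul] at hcvx
  have hGadd : Real.Gamma (y + β) = (y - 1 + β) * Real.Gamma (y - 1 + β) := by
    have := Real.Gamma_add_one (ne_of_gt hx0)
    rw [show y - 1 + β + 1 = y + β by ring] at this
    exact this
  have hlog : Real.log (Real.Gamma (y - 1 + β)) =
      Real.log (Real.Gamma (y + β)) - Real.log (y - 1 + β) := by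
    rw [hGadd, Real.log_mul (ne_of_gt hx0) (ne_of_gt (Real.Gamma_pos_of_pos hx0))]
    ring
  rw [hlog] at hcvx
  have key : Real.Gamma y * (y - 1 + β) ^ β ≤ Real.Gamma (y + β) := by
    have h1 : Real.log (Real.Gamma y * (y - 1 + β) ^ β) ≤ Real.log (Real.Gamma (y + β)) := by
      rw [Real.log_mul (ne_of_gt (Real.Gamma_pos_of_pos hy0))
        (ne_of_gt (Real.rpow_pos_of_pos hx0 β)), Real.log_rpow hx0]
      nlinarith [hcvx]
    have h2 : 0 < Real.Gamma y * (y - 1 + β) ^ β :=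
      mul_pos (Real.Gamma_pos_of_pos hy0) (Real.rpow_pos_of_pos hx0 β)
    calc Real.Gamma y * (y - 1 + β) ^ β = Real.exp (Real.log _) := (Real.exp_log h2).symm
      _ ≤ Real.exp (Real.log (Real.Gamma (y + β))) := Real.exp_le_exp.mpr h1
      _ = Real.Gamma (y + β) := Real.exp_log (Real.Gamma_pos_of_pos hyβ)
  refine key.trans ?_
  exact Real.Gamma_strictMonoOn_Ici.monotoneOn (by simp; linarith) (by simp; linarith)
    (by linarith)

lemma summable_pow_div_gamma (α c q : ℝ) (hα : 0 < α) :
    Summable (fun n : ℕ => q ^ n / Real.Gamma (n * α + c)) := by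
  set β := min α 1 with hβdef
  have hβ0 : 0 < β := lt_min hα one_pos
  have h0 : Tendsto (fun n : ℕ => (n : ℝ) * α) atTop atTop :=
    Tendsto.atTop_mul_const hα tendsto_natCast_atTop_atTop
  have h1 : Tendsto (fun n : ℕ => (n : ℝ) * α + c - 1 + β) atTop atTop := by
    have := tendsto_atTop_add_const_right atTop (c - 1 + β) h0
    exact this.congr (fun n => by ring)
  have h2 : Tendsto (fun n : ℕ => ((n : ℝ) * α + c - 1 + β) ^ β) atTop atTop :=
    (tendsto_rpow_atTop hβ0).comp h1
  refine summable_of_ratio_norm_eventually_le (r := 1/2) (by norm_num) ?_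
  filter_upwards [h2.eventually_ge_atTop (2 * |q|), h0.eventually_ge_atTop (2 - c)]
    with n hrg' hn2
  set y : ℝ := (n : ℝ) * α + c with hy
  have hy2 : 2 ≤ y := by simp only [hy]; linarith
  have hΓy : 0 < Real.Gamma y := Real.Gamma_pos_of_pos (by linarith)
  have hΓyα : 0 < Real.Gamma (y + α) := Real.Gamma_pos_of_pos (by linarith)
  have hrg : 2 * |q| ≤ (y - 1 + β) ^ β := hrg'
  have hkey := gamma_ratio_lower α hα hy2
  rw [← hβdef] at hkey
  have harg : ((n+1 : ℕ) : ℝ) * α + c = y + α := by simp only [hy]; push_cast; ring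
  have hrpos : (0:ℝ) < (y - 1 + β) ^ β := Real.rpow_pos_of_pos (by linarith) β
  calc ‖q ^ (n+1) / Real.Gamma (((n+1 : ℕ) : ℝ) * α + c)‖
      = |q| ^ (n+1) / Real.Gamma (y + α) := by
        rw [harg, norm_div, norm_pow, Real.norm_eq_abs, Real.norm_eq_abs, abs_of_pos hΓyα]
    _ ≤ 1/2 * (|q| ^ n / Real.Gamma y) := by
        rw [div_le_iff₀ hΓyα, mul_comm (1/2) _, div_mul_eq_mul_div, div_mul_eq_mul_div,
          le_div_iff₀ hΓy]
        have hq : (0:ℝ) ≤ |q| ^ n := pow_nonneg (abs_nonneg q) n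
        have : |q| ^ (n+1) = |q| ^ n * |q| := pow_succ _ _
        have hstep : |q| * Real.Gamma y * 2 ≤ Real.Gamma (y + α) := by
          nlinarith [mul_le_mul_of_nonneg_left hrg hΓy.le, hkey]
        rw [this]
        nlinarith [mul_le_mul_of_nonneg_left hstep hq]
    _ = 1/2 * ‖q ^ n / Real.Gamma ((n : ℝ) * α + c)‖ := by
        rw [norm_div, norm_pow, Real.norm_eq_abs, Real.norm_eq_abs, abs_of_pos hΓy]

lemma rpow_aux (x : ℝ) (hx : 0 < x) (α c : ℝ) (n : ℕ) :
    x ^ ((n : ℝ) * α + c) = (x ^ α) ^ n * x ^ c := by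
  rw [Real.rpow_add hx, ← Real.rpow_natCast (x ^ α) n, ← Real.rpow_mul hx.le, mul_comm α]

end aux

/-- The Gronwall series converges and integrates to the Mittag-Leffler
function minus one. -/
theorem gronwall_series_integral (α z a t : ℝ) (hα : 0 < α) (hat : a < t) :
    (∀ s : ℝ, s < t →
      Summable (fun n : ℕ =>
        z ^ (n + 1) * (t - s) ^ ((n + 1 : ℕ) * α - 1) / Real.Gamma ((n + 1 : ℕ) * α))) ∧
    (∫ s in a..t, ∑' n : ℕ,
        z ^ (n + 1) * (t - s) ^ ((n + 1 : ℕ) * α - 1) / Real.Gamma ((n + 1 : ℕ) * α))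
      = (∑' k : ℕ, (z * (t - a) ^ α) ^ k / Real.Gamma (k * α + 1)) - 1 := by
  have hta : (0:ℝ) < t - a := by linarith
  have hp : ∀ n : ℕ, (0:ℝ) < ((n + 1 : ℕ) : ℝ) * α := by
    intro n
    positivity
  constructor
  · intro s hs
    have hts : (0:ℝ) < t - s := by linarith
    refine ((summable_pow_div_gamma α α (z * (t - s) ^ α) hα).mul_left
      (z * (t - s) ^ (α - 1))).congr fun n => ?_
    have e1 : ((n + 1 : ℕ) : ℝ) * α = (n : ℝ) * α + α := by push_cast; ring
    have e2 : ((n + 1 : ℕ) : ℝ) * α - 1 = (n : ℝ) * α + (α - 1) := by push_cast; ring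
    rw [e2, e1, rpow_aux (t - s) hts α (α - 1) n, mul_pow]
    ring
  · -- closed form of the per-term interval integral
    have hIval : ∀ (n : ℕ) (b : ℝ),
        (∫ s in a..t, b * (t - s) ^ (((n + 1 : ℕ) : ℝ) * α - 1)
            / Real.Gamma (((n + 1 : ℕ) : ℝ) * α))
          = b * (t - a) ^ (((n + 1 : ℕ) : ℝ) * α)
            / Real.Gamma (((n + 1 : ℕ) : ℝ) * α + 1) := by
      intro n b
      set p : ℝ := ((n + 1 : ℕ) : ℝ) * α with hpdef
      have hp0 : 0 < p := hp n
      have hint : (∫ s in a..t, (t - s) ^ (p - 1)) = (t - a) ^ p / p := by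
        rw [intervalIntegral.integral_comp_sub_left (fun x : ℝ => x ^ (p - 1)) t,
          sub_self]
        rw [integral_rpow (Or.inl (by linarith : (-1:ℝ) < p - 1))]
        rw [sub_add_cancel, Real.zero_rpow hp0.ne']
        ring
      simp_rw [mul_div_assoc, div_eq_mul_inv]
      rw [intervalIntegral.integral_const_mul, intervalIntegral.integral_mul_const, hint,
        Real.Gamma_add_one hp0.ne']
      field_simp
    -- integrability of each term
    have hFint : ∀ n : ℕ, IntegrableOn
        (fun s => z ^ (n + 1) * (t - s) ^ (((n + 1 : ℕ) : ℝ) * α - 1)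
          / Real.Gamma (((n + 1 : ℕ) : ℝ) * α)) (Ioc a t) volume := by
      intro n
      have h0 : IntervalIntegrable (fun x : ℝ => x ^ (((n + 1 : ℕ) : ℝ) * α - 1)) volume
          0 (t - a) := intervalIntegrable_rpow' (by linarith [hp n])
      have h1 := (h0.comp_sub_left t).symm
      rw [sub_zero, sub_sub_cancel] at h1
      have h2 := (h1.const_mul (z ^ (n + 1))).div_const
        (Real.Gamma (((n + 1 : ℕ) : ℝ) * α))
      rwa [intervalIntegrable_iff_integrableOn_Ioc_of_le hat.le] at h2
    -- value of the norm integrals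
    have hnormval : ∀ n : ℕ,
        (∫ s in Ioc a t, ‖z ^ (n + 1) * (t - s) ^ (((n + 1 : ℕ) : ℝ) * α - 1)
            / Real.Gamma (((n + 1 : ℕ) : ℝ) * α)‖)
          = |z| ^ (n + 1) * (t - a) ^ (((n + 1 : ℕ) : ℝ) * α)
            / Real.Gamma (((n + 1 : ℕ) : ℝ) * α + 1) := by
      intro n
      have hΓ : 0 < Real.Gamma (((n + 1 : ℕ) : ℝ) * α) := Real.Gamma_pos_of_pos (hp n)
      have heq : EqOn
          (fun s => ‖z ^ (n + 1) * (t - s) ^ (((n + 1 : ℕ) : ℝ) * α - 1)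
            / Real.Gamma (((n + 1 : ℕ) : ℝ) * α)‖)
          (fun s => |z| ^ (n + 1) * (t - s) ^ (((n + 1 : ℕ) : ℝ) * α - 1)
            / Real.Gamma (((n + 1 : ℕ) : ℝ) * α)) (Ioc a t) := by
        intro s hs
        have hts : 0 ≤ t - s := by linarith [hs.2]
        simp only [norm_div, norm_mul, Real.norm_eq_abs, abs_pow,
          abs_of_pos hΓ, abs_of_nonneg (Real.rpow_nonneg hts _)]
      rw [setIntegral_congr_fun measurableSet_Ioc heq,
        ← intervalIntegral.integral_of_le hat.le, hIval n (|z| ^ (n + 1))]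
    -- summability of norm integrals
    have hnormsum : Summable (fun n : ℕ =>
        |z| ^ (n + 1) * (t - a) ^ (((n + 1 : ℕ) : ℝ) * α)
          / Real.Gamma (((n + 1 : ℕ) : ℝ) * α + 1)) := by
      refine ((summable_pow_div_gamma α (α + 1) (|z| * (t - a) ^ α) hα).mul_left
        (|z| * (t - a) ^ α)).congr fun n => ?_
      have e1 : ((n + 1 : ℕ) : ℝ) * α + 1 = (n : ℝ) * α + (α + 1) := by push_cast; ring
      have e2 : ((n + 1 : ℕ) : ℝ) * α = (n : ℝ) * α + α := by push_cast; ring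
      rw [e1, e2, rpow_aux (t - a) hta α α n, mul_pow]
      ring
    -- interchange integral and sum
    rw [intervalIntegral.integral_of_le hat.le]
    rw [← MeasureTheory.integral_tsum_of_summable_integral_norm hFint
      (by
        refine hnormsum.congr fun n => ?_
        exact (hnormval n).symm)]
    -- compute each integral
    have hterm : ∀ n : ℕ, (∫ s in Ioc a t,
        z ^ (n + 1) * (t - s) ^ (((n + 1 : ℕ) : ℝ) * α - 1)
          / Real.Gamma (((n + 1 : ℕ) : ℝ) * α))
        = (z * (t - a) ^ α) ^ (n + 1) / Real.Gamma (((n + 1 : ℕ) : ℝ) * α + 1) := by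
      intro n
      rw [← intervalIntegral.integral_of_le hat.le, hIval n (z ^ (n + 1)), mul_pow]
      congr 2
      rw [← Real.rpow_natCast ((t - a) ^ α) (n + 1), ← Real.rpow_mul hta.le, mul_comm α]
    -- rewrite the RHS tsum
    have hsum1 : Summable (fun k : ℕ => (z * (t - a) ^ α) ^ k / Real.Gamma (k * α + 1)) :=
      summable_pow_div_gamma α 1 (z * (t - a) ^ α) hα
    rw [Summable.tsum_eq_zero_add hsum1]
    simp only [Nat.cast_zero, zero_mul, zero_add, Real.Gamma_one, pow_zero]
    rw [show (1 / 1 + ∑' n : ℕ, (z * (t - a) ^ α) ^ (n + 1)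
        / Real.Gamma ((n + 1 : ℕ) * α + 1)) - 1
      = ∑' n : ℕ, (z * (t - a) ^ α) ^ (n + 1) / Real.Gamma ((n + 1 : ℕ) * α + 1) by
        norm_num]
    exact tsum_congr hterm
end
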